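/- arXiv:1903.04761 — 2 statements merged into one kernel-verified Lean document; each statement's English description precedes it below -/
import Mathlib

section
/- For every long-hole-free graph G and every weight function w : V(G) → [0,∞), there exists a set X ⊆ V(G) with |X| ≤ 3(Δ(G)+1) such that every connected component of G − X has total weight at most half the total weight of V(G). -/
open SimpleGraph

variable {V : Type*}

/-- Open neighborhood of a set: vertices outside `D` with a neighbor in `D`. -/
def nbhdSet (G : SimpleGraph V) (D : Set V) : Set V :=
  {v | v ∉ D ∧ ∃ d ∈ D, G.Adj v d}

/-- `D` is a connected component of `G - X`. -/
def IsCompOf (G : SimpleGraph V) (X : Set V) (D : Set V) : Prop :=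
  D.Nonempty ∧ D ⊆ Xᶜ ∧ (G.induce D).Connected ∧
    ∀ u ∈ D, ∀ w, w ∉ X → G.Adj u w → w ∈ D

/-- `D` is a full component for `X`: a component of `G - X` with `N(D) = X`. -/
def IsFullComp (G : SimpleGraph V) (X D : Set V) : Prop :=
  IsCompOf G X D ∧ nbhdSet G D = X

/-- `X` is an `s,t`-separator. -/
def IsSep (G : SimpleGraph V) (X : Set V) (s t : V) : Prop :=
  ∃ (hs : s ∉ X) (ht : t ∉ X),
    ¬ (G.induce (Xᶜ : Set V)).Reachable ⟨s, hs⟩ ⟨t, ht⟩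

/-- `X` is a minimal separator: an inclusion-wise minimal `s,t`-separator for some `s,t`. -/
def IsMinSep (G : SimpleGraph V) (X : Set V) : Prop :=
  ∃ s t, IsSep G X s t ∧ ∀ Y ⊆ X, IsSep G Y s t → Y = X

/-- No induced cycle of length at least 5. -/
def LongHoleFree (G : SimpleGraph V) : Prop :=
  ∀ n, 5 ≤ n → IsEmpty (SimpleGraph.cycleGraph n ↪g G)

/-- The `k`-prism: two `k`-cliques joined by a perfect matching. -/
def prism (k : ℕ) : SimpleGraph (Fin k ⊕ Fin k) where
  Adj x y := match x, y with
    | Sum.inl i, Sum.inl j => i ≠ j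
    | Sum.inr i, Sum.inr j => i ≠ j
    | Sum.inl i, Sum.inr j => i = j
    | Sum.inr i, Sum.inl j => i = j
  symm := ⟨by rintro (i|i) (j|j) h <;> exact h.symm⟩
  loopless := ⟨by rintro (i|i) h <;> exact h rfl⟩

/-- Chordal: no induced cycle of length at least 4. -/
def IsChordal (G : SimpleGraph V) : Prop :=
  ∀ n, 4 ≤ n → IsEmpty (SimpleGraph.cycleGraph n ↪g G)

/-- `Ω` is an inclusion-wise maximal clique of `G`. -/
def IsMaxClique (G : SimpleGraph V) (Ω : Set V) : Prop :=
  G.IsClique Ω ∧ ∀ Ω', G.IsClique Ω' → Ω ⊆ Ω' → Ω' = Ω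

/-- `Ω` is a potential maximal clique of `G`: a maximal clique of some
minimal chordal completion of `G`. -/
def IsPMC (G : SimpleGraph V) (Ω : Set V) : Prop :=
  ∃ H : SimpleGraph V, G ≤ H ∧ IsChordal H ∧
    (∀ H', G ≤ H' → H' ≤ H → IsChordal H' → H' = H) ∧ IsMaxClique H Ω

/-- The family of full components of `G - S`. -/
def fullComps (G : SimpleGraph V) (S : Set V) : Set (Set V) :=
  {D | IsFullComp G S D}

/-- `ζ_G(S) = max(0, #full components of G - S  - 1)`. -/
noncomputable def zeta (G : SimpleGraph V) (S : Set V) : ℕ :=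
  (fullComps G S).ncard - 1


namespace Stmt17P

lemma isChain_iff_get {α : Type*} {R : α → α → Prop} {l : List α} :
    List.IsChain R l ↔ ∀ (i : ℕ) (h : i < l.length - 1),
      R (l.get ⟨i, by omega⟩) (l.get ⟨i + 1, by omega⟩) := by
  rw [List.isChain_iff_getElem]
  constructor <;> intro h i hi <;> exact h i (by omega)

/-- closed neighborhood -/
def clN (G : SimpleGraph V) (v : V) : Set V := insert v (G.neighborSet v)

lemma mem_clN {G : SimpleGraph V} {v u : V} : u ∈ clN G v ↔ u = v ∨ G.Adj v u := by
  simp [clN]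

lemma self_mem_clN {G : SimpleGraph V} {v : V} : v ∈ clN G v := mem_clN.mpr (Or.inl rfl)

lemma adj_mem_clN {G : SimpleGraph V} {v u : V} (h : G.Adj v u) : u ∈ clN G v :=
  mem_clN.mpr (Or.inr h)

lemma ncard_clN_le [Fintype V] (G : SimpleGraph V) [DecidableRel G.Adj] (v : V) :
    (clN G v).ncard ≤ G.maxDegree + 1 := by
  classical
  have h1 : clN G v = ↑(insert v (G.neighborFinset v)) := by
    simp [clN, Set.ext_iff]
  rw [h1, Set.ncard_coe_finset]
  calc (insert v (G.neighborFinset v)).card ≤ (G.neighborFinset v).card + 1 :=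
        Finset.card_insert_le _ _
    _ ≤ G.maxDegree + 1 := by
        have := G.degree_le_maxDegree v
        rw [SimpleGraph.degree] at this
        omega

lemma wsum_le [Fintype V] {w : V → ℝ} (hw : ∀ v, 0 ≤ w v) (D : Set V) :
    ∑ᶠ v ∈ D, w v ≤ ∑ v, w v := by
  classical
  have hD := Set.toFinite D
  rw [← hD.coe_toFinset, finsum_mem_coe_finset]
  exact Finset.sum_le_sum_of_subset_of_nonneg (Finset.subset_univ _) (fun i _ _ => hw i)

lemma heavy_inter [Fintype V] {w : V → ℝ} (hw : ∀ v, 0 ≤ w v) {A B : Set V}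
    (hA : (∑ v, w v) / 2 < ∑ᶠ v ∈ A, w v) (hB : (∑ v, w v) / 2 < ∑ᶠ v ∈ B, w v) :
    (A ∩ B).Nonempty := by
  classical
  by_contra hcon
  rw [Set.not_nonempty_iff_eq_empty] at hcon
  have hAf := Set.toFinite A
  have hBf := Set.toFinite B
  rw [← hAf.coe_toFinset, finsum_mem_coe_finset] at hA
  rw [← hBf.coe_toFinset, finsum_mem_coe_finset] at hB
  have hdisj : Disjoint hAf.toFinset hBf.toFinset := by
    rw [Finset.disjoint_left]
    intro a ha hb
    rw [Set.Finite.mem_toFinset] at ha hb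
    have : a ∈ A ∩ B := ⟨ha, hb⟩
    simp [hcon] at this
  have hunion : ∑ v ∈ hAf.toFinset, w v + ∑ v ∈ hBf.toFinset, w v
      = ∑ v ∈ hAf.toFinset ∪ hBf.toFinset, w v := (Finset.sum_union hdisj).symm
  have hle : ∑ v ∈ hAf.toFinset ∪ hBf.toFinset, w v ≤ ∑ v, w v :=
    Finset.sum_le_sum_of_subset_of_nonneg (Finset.subset_univ _) (fun i _ _ => hw i)
  linarith

lemma comp_walk {G : SimpleGraph V} {X C : Set V} (h : IsCompOf G X C) {a b : V}
    (ha : a ∈ C) (hb : b ∈ C) : ∃ p : G.Walk a b, ∀ y ∈ p.support, y ∈ C := by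
  obtain ⟨hne, hsub, hconn, hcl⟩ := h
  obtain ⟨q⟩ := hconn.preconnected ⟨a, ha⟩ ⟨b, hb⟩
  let f : G.induce C →g G := ⟨Subtype.val, fun {x y} h => h⟩
  refine ⟨q.map f, ?_⟩
  intro y hy
  rw [SimpleGraph.Walk.support_map] at hy
  obtain ⟨z, _, rfl⟩ := List.mem_map.mp hy
  exact z.2

lemma walk_closed {G : SimpleGraph V} {X C : Set V}
    (hcl : ∀ u ∈ C, ∀ z, z ∉ X → G.Adj u z → z ∈ C) {a b : V} (p : G.Walk a b)
    (hsup : ∀ y ∈ p.support, y ∉ X) (ha : a ∈ C) : b ∈ C := by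
  induction p with
  | nil => exact ha
  | @cons u v x h q ih =>
      have hvX : v ∉ X := hsup v (by simp [SimpleGraph.Walk.support_cons])
      have hvC : v ∈ C := hcl u ha v hvX h
      exact ih (fun y hy => hsup y (by simp [SimpleGraph.Walk.support_cons, hy])) hvC

lemma comp_subset {G : SimpleGraph V} {X X' C C' : Set V}
    (hC : IsCompOf G X C) (hC' : IsCompOf G X' C')
    (hdisj : ∀ y ∈ C', y ∉ X) (hmeet : (C' ∩ C).Nonempty) : C' ⊆ C := by
  obtain ⟨z, hz', hz⟩ := hmeet
  intro y hy
  obtain ⟨p, hp⟩ := comp_walk hC' hz' hy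
  exact walk_closed hC.2.2.2 p (fun x hx => hdisj x (hp x hx)) hz


/-- A "good" list: starts at `v1`, ends in `T`, is a walk, tail inside `U`. -/
structure GoodL (G : SimpleGraph V) (v1 : V) (U T : Set V) (l : List V) : Prop where
  hlen : 2 ≤ l.length
  hhead : l.get ⟨0, by omega⟩ = v1
  hlast : l.get ⟨l.length - 1, by omega⟩ ∈ T
  hchain : List.Chain' G.Adj l
  htail : ∀ i (h : i < l.length), i ≠ 0 → l.get ⟨i, h⟩ ∈ U

lemma surgery {G : SimpleGraph V} {v1 : V} {U T : Set V} {l : List V}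
    (hl : GoodL G v1 U T l) (i s : ℕ) (hs : 1 ≤ s) (hilt : i + 1 + s < l.length)
    (hjun : G.Adj (l.get ⟨i, by omega⟩) (l.get ⟨i + 1 + s, by omega⟩)) :
    ∃ l', GoodL G v1 U T l' ∧ l'.length < l.length := by
  classical
  have hlen := hl.hlen
  set n := l.length with hn
  set f : ℕ → V := fun m => if m ≤ i then l.getD m v1 else l.getD (m + s) v1 with hf
  have hlen' : ((List.range (n - s)).map f).length = n - s := by simp
  have hget : ∀ (m : ℕ) (h : m < n - s),
      ((List.range (n - s)).map f).get ⟨m, by omega⟩ = f m := by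
    intro m h
    simp
  have hgetD : ∀ (m : ℕ) (h : m < n), l.getD m v1 = l.get ⟨m, h⟩ := by
    intro m h
    exact List.getD_eq_getElem l v1 h
  refine ⟨(List.range (n - s)).map f, ⟨?_, ?_, ?_, ?_, ?_⟩, ?_⟩
  · simp only [hlen']; omega
  · rw [hget 0 (by omega)]
    simp only [hf]
    rw [if_pos (Nat.zero_le i), hgetD 0 (by omega)]
    exact hl.hhead
  · simp only [hlen']
    rw [hget (n - s - 1) (by omega)]
    simp only [hf]
    rw [if_neg (by omega), hgetD (n - s - 1 + s) (by omega)]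
    have h2 : n - s - 1 + s = n - 1 := by omega
    simp only [h2]
    exact hl.hlast
  · refine isChain_iff_get.mpr ?_
    intro m hm
    rw [hlen'] at hm
    rw [hget m (by omega), hget (m+1) (by omega)]
    simp only [hf]
    rcases Nat.lt_trichotomy (m+1) (i+1) with hc | hc | hc
    · rw [if_pos (by omega), if_pos (by omega), hgetD m (by omega), hgetD (m+1) (by omega)]
      exact isChain_iff_get.mp hl.hchain m (by omega)
    · have hmi : m = i := by omega
      subst hmi
      rw [if_pos (le_refl m), if_neg (by omega), hgetD m (by omega),
        hgetD (m + 1 + s) (by omega)]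
      exact hjun
    · rw [if_neg (by omega), if_neg (by omega), hgetD (m + s) (by omega),
        hgetD (m + 1 + s) (by omega)]
      have h3 := isChain_iff_get.mp hl.hchain (m + s) (by omega)
      convert h3 using 3
      omega
  · intro m h hm0
    rw [hlen'] at h
    rw [hget m h]
    simp only [hf]
    by_cases hmi : m ≤ i
    · rw [if_pos hmi, hgetD m (by omega)]
      exact hl.htail m (by omega) hm0
    · rw [if_neg hmi, hgetD (m + s) (by omega)]
      exact hl.htail (m + s) (by omega) (by omega)
  · rw [hlen']
    omega

lemma truncate {G : SimpleGraph V} {v1 : V} {U T : Set V} {l : List V}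
    (hl : GoodL G v1 U T l) (m : ℕ) (hm : m < l.length) (h1 : 1 ≤ m)
    (hmT : l.get ⟨m, hm⟩ ∈ T) :
    ∃ l', GoodL G v1 U T l' ∧ l'.length = m + 1 := by
  have hlen : (l.take (m+1)).length = m + 1 := by simp; omega
  have hget : ∀ (k : ℕ) (h : k < m + 1),
      (l.take (m+1)).get ⟨k, by omega⟩ = l.get ⟨k, by omega⟩ := by
    intro k h
    simp [List.getElem_take]
  refine ⟨l.take (m+1), ⟨?_, ?_, ?_, ?_, ?_⟩, hlen⟩
  · simp only [hlen]; omega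
  · rw [hget 0 (by omega)]
    exact hl.hhead
  · simp only [hlen]
    have h2 : m + 1 - 1 = m := by omega
    simp only [h2]
    rw [hget m (by omega)]
    exact hmT
  · exact hl.hchain.take _
  · intro k h hk0
    rw [hlen] at h
    rw [hget k h]
    exact hl.htail k (by omega) hk0


variable {G : SimpleGraph V} {v1 : V} {U T : Set V} {l : List V}

lemma exists_min_good (hv1U : v1 ∉ U) (hTU : T ⊆ U)
    (l0 : List V) (h0 : GoodL G v1 U T l0) :
    ∃ l, GoodL G v1 U T l ∧ l.Nodup ∧
      (∀ i j (hi : i < l.length) (hj : j < l.length), i + 1 < j →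
        ¬ G.Adj (l.get ⟨i, hi⟩) (l.get ⟨j, hj⟩)) ∧
      (∀ i (hi : i < l.length), i < l.length - 1 → l.get ⟨i, hi⟩ ∉ T) := by
  classical
  set P : ℕ → Prop := fun k => ∃ l : List V, GoodL G v1 U T l ∧ l.length = k with hP
  have hPex : ∃ k, P k := ⟨l0.length, l0, h0, rfl⟩
  obtain ⟨l, hl, hlk⟩ : P (Nat.find hPex) := Nat.find_spec hPex
  have hmin : ∀ l' : List V, GoodL G v1 U T l' → l.length ≤ l'.length := by
    intro l' h'
    rw [hlk]
    exact Nat.find_le ⟨l', h', rfl⟩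
  -- internal vertices not in T
  have hintT : ∀ i (hi : i < l.length), i < l.length - 1 → l.get ⟨i, hi⟩ ∉ T := by
    intro i hi hi2 hiT
    by_cases hi0 : i = 0
    · subst hi0
      rw [hl.hhead] at hiT
      exact hv1U (hTU hiT)
    · obtain ⟨l', hl', hlen'⟩ := truncate hl i hi (by omega) hiT
      have := hmin l' hl'
      omega
  -- non-consecutive non-adjacent
  have hnc : ∀ i j (hi : i < l.length) (hj : j < l.length), i + 1 < j →
      ¬ G.Adj (l.get ⟨i, hi⟩) (l.get ⟨j, hj⟩) := by
    intro i j hi hj hij hadj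
    obtain ⟨l', hl', hlen'⟩ := surgery hl i (j - i - 1) (by omega) (by omega)
      (by convert hadj using 3; omega)
    have := hmin l' hl'
    omega
  have key : ∀ (a b : Fin l.length), a.val < b.val → l.get a = l.get b → False := by
    intro a b hc hab
    by_cases ha0 : a.val = 0
    · -- l.get b = v1 ∉ U but b is a tail element
      have hbU : l.get b ∈ U := by
        have := hl.htail b.val b.2 (by omega)
        simpa using this
      rw [← hab] at hbU
      have : l.get a = v1 := by
        have := hl.hhead
        rw [show a = (⟨0, by omega⟩ : Fin l.length) from Fin.ext ha0]
        exact this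
      rw [this] at hbU
      exact hv1U hbU
    · by_cases hblast : b.val = l.length - 1
      · -- then l.get a ∈ T, contradiction with internal not in T
        have hbT : l.get b ∈ T := by
          have := hl.hlast
          rw [show b = (⟨l.length - 1, by have := hl.hlen; omega⟩ : Fin l.length) from
            Fin.ext hblast]
          exact this
        rw [← hab] at hbT
        exact hintT a.val a.2 (by omega) (by simpa using hbT)
      · -- surgery identifying a and b
        have hb1 : b.val + 1 < l.length := by have := b.2; omega
        have hjun : G.Adj (l.get ⟨a.val, a.2⟩) (l.get ⟨b.val + 1, hb1⟩) := by
          have hch := isChain_iff_get.mp hl.hchain b.val (by omega)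
          have : l.get ⟨a.val, a.2⟩ = l.get ⟨b.val, b.2⟩ := by simpa using hab
          rw [this]
          convert hch using 3
        obtain ⟨l', hl', hlen'⟩ := surgery hl a.val (b.val - a.val) (by omega) (by omega)
          (by convert hjun using 3; omega)
        have := hmin l' hl'
        omega

  refine ⟨l, hl, ?_, hnc, hintT⟩
  rw [List.nodup_iff_injective_get]
  intro a b hab
  by_contra hne
  rcases Nat.lt_trichotomy a.val b.val with hc | hc | hc
  · exact key a b hc hab
  · exact hne (Fin.ext hc)
  · exact key b a hc hab.symm




lemma hole_of_fn {G : SimpleGraph V} (hG : LongHoleFree G) (n : ℕ) [NeZero n] (hn : 5 ≤ n)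
    (f : Fin n → V) (hinj : Function.Injective f)
    (hiff : ∀ i j : Fin n, G.Adj (f i) (f j) ↔ j = i + 1 ∨ i = j + 1) : False := by
  obtain ⟨m, rfl⟩ : ∃ m, n = m + 2 := ⟨n - 2, by omega⟩
  refine (hG _ hn).false ⟨⟨f, hinj⟩, ?_⟩
  intro i j
  simp only [Function.Embedding.coeFn_mk]
  rw [hiff, cycleGraph_adj]
  constructor
  · rintro (h | h)
    · exact Or.inr (by rw [h, add_sub_cancel_left])
    · exact Or.inl (by rw [h, add_sub_cancel_left])
  · rintro (h | h)
    · exact Or.inr (by rw [sub_eq_iff_eq_add'] at h; exact h)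
    · exact Or.inl (by rw [sub_eq_iff_eq_add'] at h; exact h)

lemma hole_of_list {G : SimpleGraph V} (hG : LongHoleFree G) (L : List V) (h5 : 5 ≤ L.length)
    (hnd : L.Nodup) (hchain : List.Chain' G.Adj L)
    (hwrap : G.Adj (L.get ⟨L.length - 1, by omega⟩) (L.get ⟨0, by omega⟩))
    (hnc : ∀ i j (hi : i < L.length) (hj : j < L.length), i + 1 < j →
      ¬(i = 0 ∧ j = L.length - 1) → ¬ G.Adj (L.get ⟨i, hi⟩) (L.get ⟨j, hj⟩)) : False := by
  have hinj : Function.Injective L.get := List.nodup_iff_injective_get.mp hnd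
  haveI : NeZero L.length := ⟨by omega⟩
  refine hole_of_fn hG L.length h5 L.get hinj ?_
  intro i j
  have hi := i.2
  have hj := j.2
  have hmk : ∀ (k : Fin L.length), L.get ⟨k.val, k.2⟩ = L.get k := fun k => rfl
  have hone : ((1 : Fin L.length)).val = 1 := by
    rw [Fin.val_one']
    exact Nat.mod_eq_of_lt (by omega)
  have hvadd : ∀ (k : Fin L.length), k.val < L.length - 1 → (k + 1).val = k.val + 1 := by
    intro k hk
    rw [Fin.val_add, hone]
    exact Nat.mod_eq_of_lt (by omega)
  have hvwrap : ∀ (k : Fin L.length), k.val = L.length - 1 → (k + 1).val = 0 := by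
    intro k hk
    rw [Fin.val_add, hone, hk]
    have : L.length - 1 + 1 = L.length := by omega
    rw [this, Nat.mod_self]
  constructor
  · intro hadj
    rcases Nat.lt_trichotomy i.val j.val with hc | hc | hc
    · by_cases hcons : j.val = i.val + 1
      · exact Or.inl (Fin.ext (by rw [hvadd i (by omega)]; exact hcons))
      · by_cases hwrapc : i.val = 0 ∧ j.val = L.length - 1
        · exact Or.inr (Fin.ext (by rw [hvwrap j hwrapc.2]; exact hwrapc.1))
        · exact absurd hadj (by
            have := hnc i.val j.val i.2 j.2 (by omega) hwrapc
            rw [hmk i, hmk j] at this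
            exact this)
    · exact absurd hadj (by rw [Fin.ext hc]; exact G.irrefl)
    · by_cases hcons : i.val = j.val + 1
      · exact Or.inr (Fin.ext (by rw [hvadd j (by omega)]; exact hcons))
      · by_cases hwrapc : j.val = 0 ∧ i.val = L.length - 1
        · exact Or.inl (Fin.ext (by rw [hvwrap i hwrapc.2]; exact hwrapc.1))
        · exact absurd hadj.symm (by
            have := hnc j.val i.val j.2 i.2 (by omega) hwrapc
            rw [hmk j, hmk i] at this
            exact this)
  · rintro (rfl | rfl)
    · by_cases hlast : i.val = L.length - 1
      · have h1 : (i + 1).val = 0 := hvwrap i hlast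
        have h2 : G.Adj (L.get ⟨L.length - 1, by omega⟩) (L.get ⟨0, by omega⟩) := hwrap
        have e1 : (⟨L.length - 1, by omega⟩ : Fin L.length) = i := Fin.ext hlast.symm
        have e2 : (⟨0, by omega⟩ : Fin L.length) = i + 1 := Fin.ext h1.symm
        rw [e1, e2] at h2
        exact h2
      · have h1 : (i + 1).val = i.val + 1 := hvadd i (by omega)
        have h2 := isChain_iff_get.mp hchain i.val (by omega)
        have e1 : (⟨i.val, by omega⟩ : Fin L.length) = i := Fin.ext rfl
        have e2 : (⟨i.val + 1, by omega⟩ : Fin L.length) = i + 1 := Fin.ext h1.symm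
        rw [e1, e2] at h2
        exact h2
    · apply G.adj_symm
      by_cases hlast : j.val = L.length - 1
      · have h1 : (j + 1).val = 0 := hvwrap j hlast
        have h2 : G.Adj (L.get ⟨L.length - 1, by omega⟩) (L.get ⟨0, by omega⟩) := hwrap
        have e1 : (⟨L.length - 1, by omega⟩ : Fin L.length) = j := Fin.ext hlast.symm
        have e2 : (⟨0, by omega⟩ : Fin L.length) = j + 1 := Fin.ext h1.symm
        rw [e1, e2] at h2
        exact h2
      · have h1 : (j + 1).val = j.val + 1 := hvadd j (by omega)
        have h2 := isChain_iff_get.mp hchain j.val (by omega)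
        have e1 : (⟨j.val, by omega⟩ : Fin L.length) = j := Fin.ext rfl
        have e2 : (⟨j.val + 1, by omega⟩ : Fin L.length) = j + 1 := Fin.ext h1.symm
        rw [e1, e2] at h2
        exact h2


section Main

variable [Fintype V] {G : SimpleGraph V} [DecidableRel G.Adj] {w : V → ℝ}

lemma not_mem_of_comp {X C : Set V} (h : IsCompOf G X C) {y : V} (hy : y ∈ C) : y ∉ X :=
  fun hX => (h.2.1 hy) hX

lemma bound1 (a : V) : (clN G a).ncard ≤ 3 * (G.maxDegree + 1) := by
  have := ncard_clN_le G a; omega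

lemma bound2 (a b : V) : (clN G a ∪ clN G b).ncard ≤ 3 * (G.maxDegree + 1) := by
  have h0 := Set.ncard_union_le (clN G a) (clN G b)
  have h1 := ncard_clN_le G a
  have h2 := ncard_clN_le G b
  omega

lemma bound3 (a b c : V) : (clN G a ∪ clN G b ∪ clN G c).ncard ≤ 3 * (G.maxDegree + 1) := by
  have h0 := Set.ncard_union_le (clN G a ∪ clN G b) (clN G c)
  have h0' := Set.ncard_union_le (clN G a) (clN G b)
  have h1 := ncard_clN_le G a
  have h2 := ncard_clN_le G b
  have h3 := ncard_clN_le G c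
  omega

/-- The collection of heavy components of complements of closed neighborhoods of
induced paths on at most 3 vertices. -/
def SS (G : SimpleGraph V) (w : V → ℝ) : Set (Set V) :=
  {C | ((∑ v, w v) / 2 < ∑ᶠ v ∈ C, w v) ∧
    ((∃ v1, IsCompOf G (clN G v1) C) ∨
     (∃ v1 v2, G.Adj v1 v2 ∧ IsCompOf G (clN G v1 ∪ clN G v2) C) ∨
     (∃ v1 v2 v3, G.Adj v1 v2 ∧ G.Adj v2 v3 ∧ ¬G.Adj v1 v3 ∧ v1 ≠ v3 ∧
        IsCompOf G (clN G v1 ∪ clN G v2 ∪ clN G v3) C))}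

variable (hw : ∀ v, 0 ≤ w v)
  (Hc : ∀ X : Set V, X.ncard ≤ 3 * (G.maxDegree + 1) →
      ∃ D, IsCompOf G X D ∧ (∑ v, w v) / 2 < ∑ᶠ v ∈ D, w v)

include hw Hc

lemma caseOne {C0 : Set V} (hmin : ∀ C' ∈ SS G w, C0.ncard ≤ C'.ncard)
    (hheavy : (∑ v, w v) / 2 < ∑ᶠ v ∈ C0, w v)
    {v1 : V} (hC0 : IsCompOf G (clN G v1) C0) : False := by
  classical
  have hnm := fun {y} (hy : y ∈ C0) => not_mem_of_comp hC0 hy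
  by_cases hex : ∃ x c, c ∈ C0 ∧ x ∉ C0 ∧ G.Adj x c
  · obtain ⟨x, c, hc, hxn, hxc⟩ := hex
    have hxX : x ∈ clN G v1 := by
      by_contra hxX
      exact hxn (hC0.2.2.2 c hc x hxX hxc.symm)
    have hx1 : x ≠ v1 := by
      rintro rfl
      exact hnm hc (adj_mem_clN hxc)
    have hadj : G.Adj v1 x := (mem_clN.mp hxX).resolve_left hx1
    obtain ⟨C', hC', hh'⟩ := Hc (clN G v1 ∪ clN G x) (bound2 v1 x)
    have hnm' := fun {y} (hy : y ∈ C') => not_mem_of_comp hC' hy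
    have hC'S : C' ∈ SS G w := ⟨hh', Or.inr (Or.inl ⟨v1, x, hadj, hC'⟩)⟩
    have hmeet : (C' ∩ C0).Nonempty := heavy_inter hw hh' hheavy
    have hsub : C' ⊆ C0 := comp_subset hC0 hC'
      (fun y hy hyX => hnm' hy (Or.inl hyX)) hmeet
    have hcnot : c ∉ C' := fun hcC' => hnm' hcC' (Or.inr (adj_mem_clN hxc))
    have hlt : C'.ncard < C0.ncard :=
      Set.ncard_lt_ncard ⟨hsub, fun hss => hcnot (hss hc)⟩ (Set.toFinite C0)
    have := hmin C' hC'S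
    omega
  · push_neg at hex
    have habs : ∀ u ∈ C0, ∀ z, G.Adj u z → z ∈ C0 := by
      intro u hu z hadj
      by_contra hz
      exact (hex z u hu hz) hadj.symm
    obtain ⟨v1', hv1'⟩ := hC0.1
    obtain ⟨C', hC', hh'⟩ := Hc (clN G v1') (bound1 v1')
    have hnm' := fun {y} (hy : y ∈ C') => not_mem_of_comp hC' hy
    have hC'S : C' ∈ SS G w := ⟨hh', Or.inl ⟨v1', hC'⟩⟩
    have hmeet : (C' ∩ C0).Nonempty := heavy_inter hw hh' hheavy
    obtain ⟨z, hz', hz⟩ := hmeet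
    have hsub : C' ⊆ C0 := by
      intro y hy
      obtain ⟨p, hp⟩ := comp_walk hC' hz' hy
      exact walk_closed (X := (∅ : Set V))
        (fun u hu z' _ ha => habs u hu z' ha) p (fun y _ => Set.notMem_empty y) hz
    have hv1'not : v1' ∉ C' := fun h => hnm' h self_mem_clN
    have hlt : C'.ncard < C0.ncard :=
      Set.ncard_lt_ncard ⟨hsub, fun hss => hv1'not (hss hv1')⟩ (Set.toFinite C0)
    have := hmin C' hC'S
    omega

lemma caseTwo {C0 : Set V} (hmin : ∀ C' ∈ SS G w, C0.ncard ≤ C'.ncard)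
    (hheavy : (∑ v, w v) / 2 < ∑ᶠ v ∈ C0, w v)
    {v1 v2 : V} (h12 : G.Adj v1 v2)
    (hC0 : IsCompOf G (clN G v1 ∪ clN G v2) C0) : False := by
  classical
  have hnm := fun {y} (hy : y ∈ C0) => not_mem_of_comp hC0 hy
  by_cases hex : ∃ x c, c ∈ C0 ∧ x ∉ C0 ∧ G.Adj x c ∧ x ∉ clN G v1
  · obtain ⟨x, c, hc, hxn, hxc, hx1⟩ := hex
    have hxX : x ∈ clN G v1 ∪ clN G v2 := by
      by_contra hxX
      exact hxn (hC0.2.2.2 c hc x hxX hxc.symm)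
    have hx2 : x ∈ clN G v2 := hxX.resolve_left hx1
    have hxne2 : x ≠ v2 := by
      rintro rfl
      exact hnm hc (Or.inr (adj_mem_clN hxc))
    have hadj2x : G.Adj v2 x := (mem_clN.mp hx2).resolve_left hxne2
    have hnadj1x : ¬ G.Adj v1 x := fun h => hx1 (adj_mem_clN h)
    have hxnev1 : v1 ≠ x := fun h => hx1 (h ▸ self_mem_clN)
    obtain ⟨C', hC', hh'⟩ := Hc (clN G v1 ∪ clN G v2 ∪ clN G x) (bound3 v1 v2 x)
    have hnm' := fun {y} (hy : y ∈ C') => not_mem_of_comp hC' hy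
    have hC'S : C' ∈ SS G w :=
      ⟨hh', Or.inr (Or.inr ⟨v1, v2, x, h12, hadj2x, hnadj1x, hxnev1, hC'⟩)⟩
    have hmeet : (C' ∩ C0).Nonempty := heavy_inter hw hh' hheavy
    have hsub : C' ⊆ C0 := comp_subset hC0 hC'
      (fun y hy hyX => hnm' hy (Or.inl hyX)) hmeet
    have hcnot : c ∉ C' := fun hcC' => hnm' hcC' (Or.inr (adj_mem_clN hxc))
    have hlt : C'.ncard < C0.ncard :=
      Set.ncard_lt_ncard ⟨hsub, fun hss => hcnot (hss hc)⟩ (Set.toFinite C0)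
    have := hmin C' hC'S
    omega
  · push_neg at hex
    have hC0' : IsCompOf G (clN G v1) C0 := by
      refine ⟨hC0.1, ?_, hC0.2.2.1, ?_⟩
      · intro y hy
        exact fun hmem => hnm hy (Or.inl hmem)
      · intro u hu z hz hadj
        by_contra hzC
        exact hz (hex z u hu hzC hadj.symm)
    exact caseOne hw Hc hmin hheavy hC0'

lemma caseThree (hG : LongHoleFree G)
    {C0 : Set V} (hmin : ∀ C' ∈ SS G w, C0.ncard ≤ C'.ncard)
    (hheavy : (∑ v, w v) / 2 < ∑ᶠ v ∈ C0, w v)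
    {v1 v2 v3 : V} (h12 : G.Adj v1 v2) (h23 : G.Adj v2 v3) (h13 : ¬G.Adj v1 v3)
    (hne13 : v1 ≠ v3)
    (hC0 : IsCompOf G (clN G v1 ∪ clN G v2 ∪ clN G v3) C0) : False := by
  classical
  have hnm := fun {y} (hy : y ∈ C0) => not_mem_of_comp hC0 hy
  by_cases hex : ∃ x c, c ∈ C0 ∧ x ∉ C0 ∧ G.Adj x c ∧ x ∉ clN G v1 ∧ x ∉ clN G v2
  swap
  · push_neg at hex
    have hC0' : IsCompOf G (clN G v1 ∪ clN G v2) C0 := by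
      refine ⟨hC0.1, ?_, hC0.2.2.1, ?_⟩
      · intro y hy
        exact fun hmem => hnm hy (Or.inl hmem)
      · intro u hu z hz hadj
        by_contra hzC
        exact hz (Or.inr (hex z u hu hzC hadj.symm (fun h => hz (Or.inl h))))
    exact caseTwo hw Hc hmin hheavy h12 hC0'
  obtain ⟨x, c, hc, hxn, hxc, hx1, hx2⟩ := hex
  have hxX : x ∈ clN G v1 ∪ clN G v2 ∪ clN G v3 := by
    by_contra hxX
    exact hxn (hC0.2.2.2 c hc x hxX hxc.symm)
  have hx3 : x ∈ clN G v3 := by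
    rcases hxX with h | h
    · rcases h with h | h
      exacts [absurd h hx1, absurd h hx2]
    · exact h
  have hxne3 : x ≠ v3 := by
    rintro rfl
    exact hnm hc (Or.inr (adj_mem_clN hxc))
  have hadj3x : G.Adj v3 x := (mem_clN.mp hx3).resolve_left hxne3
  have hnadj2x : ¬ G.Adj v2 x := fun h => hx2 (adj_mem_clN h)
  have hxnev2 : v2 ≠ x := fun h => hx2 (h ▸ self_mem_clN)
  have hnadj1x : ¬ G.Adj v1 x := fun h => hx1 (adj_mem_clN h)
  have hxnev1 : x ≠ v1 := fun h => hx1 (h ▸ self_mem_clN)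
  obtain ⟨C', hC', hh'⟩ := Hc (clN G v2 ∪ clN G v3 ∪ clN G x) (bound3 v2 v3 x)
  have hnm' := fun {y} (hy : y ∈ C') => not_mem_of_comp hC' hy
  have hC'S : C' ∈ SS G w :=
    ⟨hh', Or.inr (Or.inr ⟨v2, v3, x, h23, hadj3x, hnadj2x, hxnev2, hC'⟩)⟩
  have hmeet : (C' ∩ C0).Nonempty := heavy_inter hw hh' hheavy
  by_cases hC'1 : ∀ y ∈ C', y ∉ clN G v1
  · have hsub : C' ⊆ C0 := by
      refine comp_subset hC0 hC' (fun y hy hyX => ?_) hmeet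
      rcases hyX with h | h
      · rcases h with h | h
        exacts [hC'1 y hy h, hnm' hy (Or.inl (Or.inl h))]
      · exact hnm' hy (Or.inl (Or.inr h))
    have hcnot : c ∉ C' := fun hcC' => hnm' hcC' (Or.inr (adj_mem_clN hxc))
    have hlt : C'.ncard < C0.ncard :=
      Set.ncard_lt_ncard ⟨hsub, fun hss => hcnot (hss hc)⟩ (Set.toFinite C0)
    have := hmin C' hC'S
    omega
  · push_neg at hC'1
    obtain ⟨x', hx'C, hx'1⟩ := hC'1
    have hv1nC' : v1 ∉ C' := fun h => hnm' h (Or.inl (Or.inl (adj_mem_clN h12.symm)))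
    have hx'ne : x' ≠ v1 := fun h => hv1nC' (h ▸ hx'C)
    have hadj1x' : G.Adj v1 x' := (mem_clN.mp hx'1).resolve_left hx'ne
    set U : Set V := C0 ∪ C' with hU
    set T : Set V := {y | y ∈ U ∧ G.Adj x y} with hT
    obtain ⟨z0, hz0C', hz0C0⟩ := hmeet
    obtain ⟨p1, hp1⟩ := comp_walk hC' hx'C hz0C'
    obtain ⟨p2, hp2⟩ := comp_walk hC0 hz0C0 hc
    set p := p1.append p2 with hp
    have hpsup : ∀ y ∈ p.support, y ∈ U := by
      intro y hy
      rw [hp, SimpleGraph.Walk.mem_support_append_iff] at hy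
      rcases hy with hy | hy
      exacts [Or.inr (hp1 y hy), Or.inl (hp2 y hy)]
    have hcT : c ∈ T := ⟨Or.inl hc, hxc⟩
    have hv1U : v1 ∉ U := by
      rintro (h | h)
      · exact hnm h (Or.inl (Or.inl self_mem_clN))
      · exact hv1nC' h
    -- v1 :: p.support is a good list
    have hslen : 1 ≤ p.support.length := List.length_pos_iff.mpr (Walk.support_ne_nil p)
    have hgood : GoodL G v1 U T (v1 :: p.support) := by
      refine ⟨by simp only [List.length_cons]; omega, rfl, ?_, ?_, ?_⟩
      · have hne : p.support ≠ [] := Walk.support_ne_nil p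
        have h1 : (v1 :: p.support).get ⟨(v1 :: p.support).length - 1, by simp⟩
            = (v1 :: p.support).getLast (by simp) := by
          exact (List.getLast_eq_getElem _).symm
        rw [h1, List.getLast_cons hne, Walk.getLast_support]
        exact hcT
      · refine List.IsChain.cons (Walk.isChain_adj_support p) ?_
        intro y hy
        rw [Walk.support_eq_cons] at hy
        simp only [List.head?_cons, Option.mem_def, Option.some_inj] at hy
        subst hy
        exact hadj1x'
      · intro i h hi0
        obtain ⟨k, rfl⟩ : ∃ k, i = k + 1 := ⟨i - 1, by omega⟩
        simp only [List.get_eq_getElem, List.getElem_cons_succ]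
        have hk : k < p.support.length := by
          rw [List.length_cons] at h; omega
        exact hpsup _ (List.getElem_mem hk)
    obtain ⟨l, hl, hlnd, hlnc, hlnT⟩ :=
      exists_min_good hv1U (fun y hy => hy.1) _ hgood
    set n := l.length with hn
    have hn2 : 2 ≤ n := hl.hlen
    -- entries of l
    have hmem : ∀ y ∈ l, y = v1 ∨ y ∈ U := by
      intro y hy
      obtain ⟨⟨i, hi⟩, rfl⟩ := List.mem_iff_get.mp hy
      by_cases hi0 : i = 0
      · subst hi0
        exact Or.inl hl.hhead
      · exact Or.inr (hl.htail i hi hi0)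
    -- facts about r1 = l.get 1
    have hr1adj : G.Adj v1 (l.get ⟨1, by omega⟩) := by
      have := isChain_iff_get.mp hl.hchain 0 (by omega)
      rw [hl.hhead] at this
      exact this
    have hr1U : l.get ⟨1, by omega⟩ ∈ U := hl.htail 1 (by omega) one_ne_zero
    have hr1C' : l.get ⟨1, by omega⟩ ∈ C' := by
      rcases hr1U with h | h
      · exact absurd (adj_mem_clN hr1adj) (fun hh => hnm h (Or.inl (Or.inl hh)))
      · exact h
    have hr1nT : l.get ⟨1, by omega⟩ ∉ T := by
      intro hTmem
      exact hnm' hr1C' (Or.inr (adj_mem_clN hTmem.2))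
    have hn3 : 3 ≤ n := by
      by_contra hcon
      have hn2' : n = 2 := by omega
      have := hl.hlast
      rw [show (⟨n - 1, by omega⟩ : Fin n) = ⟨1, by omega⟩ from by
        apply Fin.ext; simp [hn2']] at this
      exact hr1nT this
    -- the cycle list
    set L : List V := l ++ [x, v3, v2] with hL
    have hLlen : L.length = n + 3 := by simp [hL, hn]
    have hgetl : ∀ (i : ℕ) (h : i < n), L.get ⟨i, by omega⟩ = l.get ⟨i, h⟩ := by
      intro i h
      simp only [hL, List.get_eq_getElem]
      rw [List.getElem_append_left]
    have hgetx : L.get ⟨n, by omega⟩ = x := by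
      simp only [hL, List.get_eq_getElem]
      rw [List.getElem_append_right (by omega)]
      simp [hn]
    have hget3 : L.get ⟨n + 1, by omega⟩ = v3 := by
      simp only [hL, List.get_eq_getElem]
      rw [List.getElem_append_right (by omega)]
      simp [hn]
    have hget2 : L.get ⟨n + 2, by omega⟩ = v2 := by
      simp only [hL, List.get_eq_getElem]
      rw [List.getElem_append_right (by omega)]
      simp [hn]
    -- not in l
    have hxl : x ∉ l := by
      intro hmemx
      rcases hmem x hmemx with h | h
      · exact hxnev1 h
      · rcases h with h | h
        · exact hxn h
        · exact hnm' h (Or.inr self_mem_clN)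
    have hv3l : v3 ∉ l := by
      intro hmemx
      rcases hmem v3 hmemx with h | h
      · exact hne13 h.symm
      · rcases h with h | h
        · exact hnm h (Or.inr self_mem_clN)
        · exact hnm' h (Or.inl (Or.inr self_mem_clN))
    have hv2l : v2 ∉ l := by
      intro hmemx
      rcases hmem v2 hmemx with h | h
      · exact h12.ne' h
      · rcases h with h | h
        · exact hnm h (Or.inl (Or.inr self_mem_clN))
        · exact hnm' h (Or.inl (Or.inl self_mem_clN))
    -- U avoids neighborhoods of v2 v3
    have hUnadj3 : ∀ y ∈ U, ¬ G.Adj y v3 := by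
      rintro y (h | h) hadj
      · exact hnm h (Or.inr (adj_mem_clN hadj.symm))
      · exact hnm' h (Or.inl (Or.inr (adj_mem_clN hadj.symm)))
    have hUnadj2 : ∀ y ∈ U, ¬ G.Adj y v2 := by
      rintro y (h | h) hadj
      · exact hnm h (Or.inl (Or.inr (adj_mem_clN hadj.symm)))
      · exact hnm' h (Or.inl (Or.inl (adj_mem_clN hadj.symm)))
    have hUnadjx : ∀ y ∈ U, y ∉ T → ¬ G.Adj y x := by
      intro y hy hyT hadj
      exact hyT ⟨hy, hadj.symm⟩
    -- apply hole_of_list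
    refine hole_of_list hG L (by omega) ?_ ?_ ?_ ?_
    · rw [hL, List.nodup_append]
      refine ⟨hlnd, ?_, ?_⟩
      · have hxv3 : x ≠ v3 := hxne3
        have hxv2 : x ≠ v2 := fun h => hxnev2 h.symm
        have hv3v2 : v3 ≠ v2 := h23.ne'
        simp [hxv3, hxv2, hv3v2]
      · intro a ha b hb hab
        subst hab
        simp only [List.mem_cons, List.mem_singleton, List.not_mem_nil, or_false] at hb
        rcases hb with rfl | rfl | rfl
        exacts [hxl ha, hv3l ha, hv2l ha]
    · rw [hL]
      refine List.IsChain.append hl.hchain ?_ ?_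
      · refine List.isChain_cons_cons.mpr ⟨hadj3x.symm, ?_⟩
        exact List.isChain_pair.mpr h23.symm
      · intro a ha b hb
        simp only [List.head?_cons, Option.mem_def, Option.some_inj] at hb
        subst hb
        have hne : l ≠ [] := by
          intro h
          have h2 := hl.hlen
          rw [h] at h2
          simp at h2
        rw [List.getLast?_eq_getLast hne, Option.mem_def, Option.some_inj] at ha
        subst ha
        have h1 : l.getLast hne = l.get ⟨n - 1, by omega⟩ := List.getLast_eq_getElem hne
        rw [h1]
        exact (hl.hlast.2).symm
    · -- wrap
      have e1 : (⟨L.length - 1, by omega⟩ : Fin L.length) = ⟨n + 2, by omega⟩ :=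
        Fin.mk_eq_mk.mpr (by omega)
      rw [e1, hget2]
      have h0 : L.get ⟨0, by omega⟩ = v1 := by
        rw [hgetl 0 (by omega)]
        exact hl.hhead
      rw [h0]
      exact h12.symm
    · intro i j hi hj hij hwrapc
      rw [hLlen] at hi hj
      rw [hLlen] at hwrapc
      -- j cases
      by_cases hjl : j < n
      · -- both in l
        rw [hgetl i (by omega), hgetl j (by omega)]
        exact hlnc i j (by omega) (by omega) hij
      · by_cases hjx : j = n
        · subst hjx
          rw [hgetl i (by omega)]
          rw [hgetx]
          by_cases hi0 : i = 0
          · subst hi0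
            rw [show (⟨0, by omega⟩ : Fin n) = ⟨0, by omega⟩ from rfl, hl.hhead]
            exact hnadj1x
          · have hiU := hl.htail i (by omega) hi0
            have hinT := hlnT i (by omega) (by omega)
            exact hUnadjx _ hiU hinT
        · by_cases hj3 : j = n + 1
          · subst hj3
            have hiln : i < n := by omega
            rw [hgetl i (by omega), hget3]
            by_cases hi0 : i = 0
            · subst hi0
              rw [show (⟨0, by omega⟩ : Fin n) = ⟨0, by omega⟩ from rfl, hl.hhead]
              exact h13
            · have hiU := hl.htail i (by omega) hi0
              exact hUnadj3 _ hiU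
          · -- j = n + 2, the vertex v2
            have hj2 : j = n + 2 := by omega
            subst hj2
            have hine : i ≠ 0 := fun h => hwrapc ⟨h, by omega⟩
            by_cases hiln : i < n
            · rw [hgetl i (by omega), hget2]
              have hiU := hl.htail i (by omega) hine
              exact hUnadj2 _ hiU
            · have hix : i = n := by omega
              subst hix
              rw [hgetx, hget2]
              exact fun h => hnadj2x h.symm

end Main

end Stmt17P

theorem stmt17 [Fintype V] (G : SimpleGraph V) [DecidableRel G.Adj]
    (hG : LongHoleFree G) (w : V → ℝ) (hw : ∀ v, 0 ≤ w v) :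
    ∃ X : Set V, X.ncard ≤ 3 * (G.maxDegree + 1) ∧
      ∀ D, IsCompOf G X D → ∑ᶠ v ∈ D, w v ≤ (∑ v, w v) / 2 := by
  classical
  by_contra hcon
  push_neg at hcon
  obtain ⟨D0, hD0, _⟩ := hcon ∅ (by simp)
  obtain ⟨u0, hu0⟩ := hD0.1
  obtain ⟨C1, hC1, hC1h⟩ := hcon (Stmt17P.clN G u0) (Stmt17P.bound1 u0)
  have hIne : {k | ∃ C ∈ Stmt17P.SS G w, C.ncard = k}.Nonempty :=
    ⟨C1.ncard, C1, ⟨hC1h, Or.inl ⟨u0, hC1⟩⟩, rfl⟩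
  obtain ⟨C0, hC0S, hC0card⟩ := Nat.sInf_mem hIne
  have hmin : ∀ C' ∈ Stmt17P.SS G w, C0.ncard ≤ C'.ncard := by
    intro C' hC'
    rw [hC0card]
    exact Nat.sInf_le ⟨C', hC', rfl⟩
  obtain ⟨hheavy, hcase⟩ := hC0S
  rcases hcase with ⟨v1, h1⟩ | ⟨v1, v2, h12, h2⟩ | ⟨v1, v2, v3, h12, h23, h13, hne, h3⟩
  · exact Stmt17P.caseOne hw hcon hmin hheavy h1
  · exact Stmt17P.caseTwo hw hcon hmin hheavy h12 h2
  · exact Stmt17P.caseThree hw hcon hG hmin hheavy h12 h23 h13 hne h3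
end

section
/- Let G be a graph, let v be a vertex, let G' = G − {v}, and let S' be a minimal separator in G'. Let A be the family of full components of G' − S' (components A with N_{G'}(A) = S') and let B ⊆ A be those components A with v ∈ N_G(A). If B is nonempty, then ζ_G(S' ∪ {v}) = |B| − 1 and ζ_G(S') ≤ |A| − |B|, where ζ_G(S) = max(0, (number of full components of G − S) − 1). Consequently ζ_{G'}(S') ≥ ζ_G(S') + ζ_G(S' ∪ {v}). -/
open SimpleGraph

variable {V : Type*}

/-- iso between double induce and induce of image -/
noncomputable def induceInduceIso (G : SimpleGraph V) (s : Set V) (D : Set s) :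
    (G.induce s).induce D ≃g G.induce (Subtype.val '' D) where
  toEquiv := Equiv.Set.image Subtype.val D Subtype.val_injective
  map_rel_iff' := by intro a b; simp [Equiv.Set.image, Equiv.Set.imageOfInjOn]

lemma connected_congr {α β : Type*} {G : SimpleGraph α} {H : SimpleGraph β} (e : G ≃g H) :
    G.Connected ↔ H.Connected :=
  ⟨fun h => h.map e.toHom e.toEquiv.surjective,
   fun h => h.map e.symm.toHom e.symm.toEquiv.surjective⟩

lemma walk_mem_comp {G : SimpleGraph V} {X D : Set V}
    (hD : IsCompOf G X D) {x y : V} (p : G.Walk x y)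
    (hp : ∀ z ∈ p.support, z ∉ X) (hx : x ∈ D) : y ∈ D := by
  induction p with
  | nil => exact hx
  | @cons a b c h q ih =>
    have hb : b ∈ D := hD.2.2.2 a hx b (hp b (by simp)) h
    exact ih (fun z hz => hp z (by simp [hz])) hb

lemma comp_subset_of_mem {G : SimpleGraph V} {X : Set V} {D E : Set V}
    (hD : IsCompOf G X D) (hE : IsCompOf G X E) {x : V} (hxD : x ∈ D) (hxE : x ∈ E) :
    D ⊆ E := by
  intro y hy
  obtain ⟨w⟩ := hD.2.2.1 ⟨x, hxD⟩ ⟨y, hy⟩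
  refine walk_mem_comp hE (w.map (SimpleGraph.Embedding.induce D).toHom) ?_ hxE
  intro z hz
  replace hz : z ∈ w.support.map (SimpleGraph.Embedding.induce (G := G) D).toHom := by
    rw [← SimpleGraph.Walk.support_map]; exact hz
  obtain ⟨z', _, rfl⟩ := List.mem_map.mp hz
  exact hD.2.1 z'.2

lemma comp_unique {G : SimpleGraph V} {X : Set V} {D E : Set V}
    (hD : IsCompOf G X D) (hE : IsCompOf G X E) {x : V} (hxD : x ∈ D) (hxE : x ∈ E) :
    D = E :=
  Set.Subset.antisymm (comp_subset_of_mem hD hE hxD hxE) (comp_subset_of_mem hE hD hxE hxD)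

section corr
variable {G : SimpleGraph V} {v : V} {S' : Set ↥({v}ᶜ : Set V)}

lemma val_ne_v (x : ↥({v}ᶜ : Set V)) : (x : V) ≠ v := x.2

lemma adj_val {a b : ↥({v}ᶜ : Set V)} :
    (G.induce ({v}ᶜ : Set V)).Adj a b ↔ G.Adj a.val b.val := Iff.rfl

lemma lemma1 {D : Set ↥({v}ᶜ : Set V)}
    (hD : IsFullComp (G.induce ({v}ᶜ : Set V)) S' D)
    (hadj : ∃ a ∈ D, G.Adj v a.val) :
    IsFullComp G (Subtype.val '' S' ∪ {v}) (Subtype.val '' D) := by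
  obtain ⟨⟨hne, hsub, hconn, hclosed⟩, hnbhd⟩ := hD
  have hnotS : ∀ x ∈ D, (x : V) ∉ Subtype.val '' S' := by
    rintro x hx ⟨y, hy, hxy⟩
    exact hsub hx (Subtype.val_injective hxy ▸ hy)
  refine ⟨⟨hne.image _, ?_, ?_, ?_⟩, ?_⟩
  · rintro _ ⟨x, hx, rfl⟩
    simp only [Set.mem_compl_iff, Set.mem_union, not_or]
    exact ⟨hnotS x hx, val_ne_v x⟩
  · exact (connected_congr (induceInduceIso G _ D)).mp hconn
  · rintro _ ⟨u', hu', rfl⟩ w hw hadjw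
    simp only [Set.mem_union, not_or] at hw
    have hwv : w ∈ ({v}ᶜ : Set V) := hw.2
    have hw' : (⟨w, hwv⟩ : ↥({v}ᶜ : Set V)) ∉ S' := fun h => hw.1 ⟨_, h, rfl⟩
    exact ⟨_, hclosed u' hu' ⟨w, hwv⟩ hw' hadjw, rfl⟩
  · ext w
    constructor
    · rintro ⟨hwnot, d, ⟨d', hd', rfl⟩, hdadj⟩
      by_cases hwv : w = v
      · exact Or.inr hwv
      · have hwmem : w ∈ ({v}ᶜ : Set V) := hwv
        have hwD : (⟨w, hwmem⟩ : ↥({v}ᶜ : Set V)) ∉ D := fun h => hwnot ⟨_, h, rfl⟩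
        have : (⟨w, hwmem⟩ : ↥({v}ᶜ : Set V)) ∈ S' := by
          rw [← hnbhd]; exact ⟨hwD, d', hd', hdadj⟩
        exact Or.inl ⟨_, this, rfl⟩
    · rintro (⟨s₀, hs₀, rfl⟩ | hwv)
      · have : s₀ ∈ nbhdSet (G.induce ({v}ᶜ : Set V)) D := hnbhd ▸ hs₀
        obtain ⟨hs₀D, d', hd', hadj'⟩ := this
        refine ⟨?_, d'.val, ⟨d', hd', rfl⟩, hadj'⟩
        rintro ⟨x, hx, hxe⟩
        exact hs₀D (Subtype.val_injective hxe ▸ hx)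
      · simp only [Set.mem_singleton_iff] at hwv
        subst hwv
        obtain ⟨a, ha, haadj⟩ := hadj
        exact ⟨by rintro ⟨x, _, hxe⟩; exact val_ne_v x hxe, a.val, ⟨a, ha, rfl⟩, haadj⟩

lemma lemma2 {E : Set V}
    (hE : IsFullComp G (Subtype.val '' S' ∪ {v}) E) :
    ∃ D, (IsFullComp (G.induce ({v}ᶜ : Set V)) S' D ∧ ∃ a ∈ D, G.Adj v a.val) ∧
      E = Subtype.val '' D := by
  obtain ⟨⟨hne, hsub, hconn, hclosed⟩, hnbhd⟩ := hE
  have hEv : E ⊆ ({v}ᶜ : Set V) := fun x hx hxv => (hsub hx) (Or.inr hxv)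
  have himg : Subtype.val '' (Subtype.val ⁻¹' E : Set ↥({v}ᶜ : Set V)) = E := by
    rw [Set.image_preimage_eq_iff.mpr]; rw [Subtype.range_coe]; exact hEv
  refine ⟨Subtype.val ⁻¹' E, ⟨⟨⟨?_, ?_, ?_, ?_⟩, ?_⟩, ?_⟩, himg.symm⟩
  · obtain ⟨x, hx⟩ := hne; exact ⟨⟨x, hEv hx⟩, hx⟩
  · intro x hx hxS
    exact (hsub hx) (Or.inl ⟨x, hxS, rfl⟩)
  · refine (connected_congr (induceInduceIso G ({v}ᶜ : Set V) (Subtype.val ⁻¹' E))).mpr ?_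
    rw [himg]; exact hconn
  · intro u' hu' w' hw' hadj'
    refine hclosed u'.val hu' w'.val ?_ hadj'
    simp only [Set.mem_union, not_or]
    exact ⟨by rintro ⟨x, hx, hxe⟩; exact hw' (Subtype.val_injective hxe ▸ hx), val_ne_v w'⟩
  · ext w'
    constructor
    · rintro ⟨hw'not, d', hd', hadj'⟩
      have : w'.val ∈ nbhdSet G E := ⟨hw'not, d'.val, hd', hadj'⟩
      rw [hnbhd] at this
      rcases this with ⟨x, hx, hxe⟩ | hv
      · exact Subtype.val_injective hxe ▸ hx
      · exact absurd hv (val_ne_v w')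
    · intro hs₀
      have : (w' : V) ∈ nbhdSet G E := hnbhd ▸ Or.inl ⟨w', hs₀, rfl⟩
      obtain ⟨hnot, d, hd, hadj'⟩ := this
      exact ⟨hnot, ⟨d, hEv hd⟩, hd, hadj'⟩
  · have : v ∈ nbhdSet G E := hnbhd ▸ Or.inr rfl
    obtain ⟨hnot, d, hd, hadj'⟩ := this
    exact ⟨⟨d, hEv hd⟩, hd, hadj'⟩

lemma lemma3 {E : Set V}
    (hE : IsFullComp G (Subtype.val '' S') E) (hv : v ∉ E) :
    ∃ D, (IsFullComp (G.induce ({v}ᶜ : Set V)) S' D ∧ ¬ ∃ a ∈ D, G.Adj v a.val) ∧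
      E = Subtype.val '' D := by
  obtain ⟨⟨hne, hsub, hconn, hclosed⟩, hnbhd⟩ := hE
  have hEv : E ⊆ ({v}ᶜ : Set V) := fun x hx hxv => hv (by rwa [Set.mem_singleton_iff.mp hxv] at hx)
  have himg : Subtype.val '' (Subtype.val ⁻¹' E : Set ↥({v}ᶜ : Set V)) = E := by
    rw [Set.image_preimage_eq_iff.mpr]; rw [Subtype.range_coe]; exact hEv
  refine ⟨Subtype.val ⁻¹' E, ⟨⟨⟨?_, ?_, ?_, ?_⟩, ?_⟩, ?_⟩, himg.symm⟩
  · obtain ⟨x, hx⟩ := hne; exact ⟨⟨x, hEv hx⟩, hx⟩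
  · intro x hx hxS
    exact (hsub hx) ⟨x, hxS, rfl⟩
  · refine (connected_congr (induceInduceIso G ({v}ᶜ : Set V) (Subtype.val ⁻¹' E))).mpr ?_
    rw [himg]; exact hconn
  · intro u' hu' w' hw' hadj'
    refine hclosed u'.val hu' w'.val ?_ hadj'
    rintro ⟨x, hx, hxe⟩; exact hw' (Subtype.val_injective hxe ▸ hx)
  · ext w'
    constructor
    · rintro ⟨hw'not, d', hd', hadj'⟩
      have : w'.val ∈ nbhdSet G E := ⟨hw'not, d'.val, hd', hadj'⟩
      rw [hnbhd] at this
      obtain ⟨x, hx, hxe⟩ := this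
      exact Subtype.val_injective hxe ▸ hx
    · intro hs₀
      have : (w' : V) ∈ nbhdSet G E := hnbhd ▸ ⟨w', hs₀, rfl⟩
      obtain ⟨hnot, d, hd, hadj'⟩ := this
      exact ⟨hnot, ⟨d, hEv hd⟩, hd, hadj'⟩
  · rintro ⟨a, ha, haadj⟩
    have : v ∈ nbhdSet G E := ⟨hv, a.val, ha, haadj⟩
    rw [hnbhd] at this
    obtain ⟨x, _, hxe⟩ := this
    exact val_ne_v x hxe

end corr

theorem stmt19' [Fintype V] (G : SimpleGraph V) (v : V)
    (S' : Set ↥({v}ᶜ : Set V))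
    (A B : Set (Set ↥({v}ᶜ : Set V)))
    (hA : A = {D | IsFullComp (G.induce ({v}ᶜ : Set V)) S' D})
    (hB : B = {D ∈ A | ∃ a ∈ D, G.Adj v a.val})
    (hBne : B.Nonempty) :
    ((({E | IsFullComp G (Subtype.val '' S' ∪ {v}) E} : Set (Set V)).ncard - 1 = B.ncard - 1) ∧
     ({E | IsFullComp G (Subtype.val '' S') E} : Set (Set V)).ncard - 1 ≤ A.ncard - B.ncard ∧
     (({E | IsFullComp G (Subtype.val '' S') E} : Set (Set V)).ncard - 1) +
       (({E | IsFullComp G (Subtype.val '' S' ∪ {v}) E} : Set (Set V)).ncard - 1) ≤ A.ncard - 1) := by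
  classical
  have hBmem : ∀ D, D ∈ B ↔ IsFullComp (G.induce ({v}ᶜ : Set V)) S' D ∧ ∃ a ∈ D, G.Adj v a.val := by
    intro D; rw [hB]; simp only [Set.mem_sep_iff, hA, Set.mem_setOf_eq]
  have hinj : Function.Injective (Set.image (Subtype.val : ↥({v}ᶜ : Set V) → V)) :=
    Set.image_injective.mpr Subtype.val_injective
  have h1 : {E | IsFullComp G (Subtype.val '' S' ∪ {v}) E} =
      (Set.image (Subtype.val : ↥({v}ᶜ : Set V) → V)) '' B := by
    ext E
    constructor
    · intro hE
      obtain ⟨D, ⟨hfull, hadj⟩, hEeq⟩ := lemma2 hE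
      exact ⟨D, (hBmem D).mpr ⟨hfull, hadj⟩, hEeq.symm⟩
    · rintro ⟨D, hD, rfl⟩
      exact lemma1 ((hBmem D).mp hD).1 ((hBmem D).mp hD).2
  have hc1 : ({E | IsFullComp G (Subtype.val '' S' ∪ {v}) E} : Set (Set V)).ncard = B.ncard := by
    rw [h1, Set.ncard_image_of_injective _ hinj]
  have hBA : B ⊆ A := by rw [hB]; exact Set.sep_subset _ _
  have hBpos : 0 < B.ncard := (Set.ncard_pos (Set.toFinite _)).mpr hBne
  have hBAcard : B.ncard ≤ A.ncard := Set.ncard_le_ncard hBA (Set.toFinite _)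
  set F : Set (Set V) := {E | IsFullComp G (Subtype.val '' S') E} with hF
  have hFsub : F ⊆ ((Set.image (Subtype.val : ↥({v}ᶜ : Set V) → V)) '' (A \ B)) ∪
      (F ∩ {E | v ∈ E}) := by
    intro E hE
    by_cases hv : v ∈ E
    · exact Or.inr ⟨hE, hv⟩
    · obtain ⟨D, ⟨hfull, hnadj⟩, hEeq⟩ := lemma3 hE hv
      refine Or.inl ⟨D, ⟨hA ▸ hfull, ?_⟩, hEeq.symm⟩
      intro hDB
      exact hnadj ((hBmem D).mp hDB).2
  have hT : (F ∩ {E | v ∈ E}).ncard ≤ 1 := by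
    rw [Set.ncard_le_one (Set.toFinite _)]
    rintro E₁ ⟨h1f, h1v⟩ E₂ ⟨h2f, h2v⟩
    exact comp_unique h1f.1 h2f.1 h1v h2v
  have hc2 : F.ncard ≤ (A.ncard - B.ncard) + 1 := by
    calc F.ncard ≤ _ := Set.ncard_le_ncard hFsub (Set.toFinite _)
    _ ≤ ((Set.image (Subtype.val : ↥({v}ᶜ : Set V) → V)) '' (A \ B)).ncard +
        (F ∩ {E | v ∈ E}).ncard := Set.ncard_union_le _ _
    _ ≤ (A.ncard - B.ncard) + 1 := by
        rw [Set.ncard_image_of_injective _ hinj, Set.ncard_diff hBA (Set.toFinite _)]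
        exact Nat.add_le_add_left hT _
  refine ⟨by rw [hc1], ?_, ?_⟩ <;> omega


theorem stmt19 [Fintype V] (G : SimpleGraph V) (v : V)
    (S' : Set ↥({v}ᶜ : Set V))
    (hS' : IsMinSep (G.induce ({v}ᶜ : Set V)) S')
    (A B : Set (Set ↥({v}ᶜ : Set V)))
    (hA : A = fullComps (G.induce ({v}ᶜ : Set V)) S')
    (hB : B = {D ∈ A | ∃ a ∈ D, G.Adj v a.val})
    (hBne : B.Nonempty) :
    zeta G (Subtype.val '' S' ∪ {v}) = B.ncard - 1 ∧
    zeta G (Subtype.val '' S') ≤ A.ncard - B.ncard ∧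
    zeta G (Subtype.val '' S') + zeta G (Subtype.val '' S' ∪ {v}) ≤
      zeta (G.induce ({v}ᶜ : Set V)) S' := by
  
  have key := stmt19' G v S' A B (by rw [hA]; rfl) hB hBne
  unfold zeta
  rw [← hA]
  exact ⟨key.1, key.2.1, key.2.2⟩
end
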